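/- arXiv:1711.01156 — 6 statements merged into one kernel-verified Lean document; each statement's English description precedes it below -/
import Mathlib

section
/- Let D : A → A be a k-linear map satisfying the graded Leibniz rule such that D(x_i) is a homogeneous polynomial of degree 2 for every i ∈ Fin n. Then there exists t : Fin n → k such that D(x_i) = x_i * (∑_{j} t j • x_j) for all i ∈ Fin n. -/
/-! Taking `a = X i`, `b = X j` and then `a = X j`, `b = X i` in the graded Leibniz rule and
cancelling 2 gives `X j * D (X i) = X i * D (X j)`. For quadratic forms `c i` with this symmetry,
applying `∂_j` to `X j * c i = X i * c j`, summing over `j` and using Euler's identity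
`∑ j, X j * ∂_j (c i) = 2 • c i` yields `(n + 1) • c i = X i * ∑ j, ∂_j (c j)`. Hence
`c i = X i * L` for the linear form `L = (n + 1)⁻¹ • ∑ j, ∂_j (c j)`. -/

open MvPolynomial

namespace MvPolynomial

variable {σ R : Type*} [CommRing R]

def IsGradedLeibniz (D : MvPolynomial σ R → MvPolynomial σ R) : Prop :=
  ∀ (d : ℕ) (a b : MvPolynomial σ R), a.IsHomogeneous d →
    D (a * b) = D a * b + ((-1 : R) ^ d) • (a * D b)

theorem IsGradedLeibniz.X_mul_apply_X_comm [IsDomain R] [CharZero R]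
    {D : MvPolynomial σ R → MvPolynomial σ R} (hD : IsGradedLeibniz D) (i j : σ) :
    X j * D (X i) = X i * D (X j) := by
  have hij := hD 1 (X i) (X j) (isHomogeneous_X R i)
  have hji := hD 1 (X j) (X i) (isHomogeneous_X R j)
  rw [mul_comm (X j)] at hji
  simp only [pow_one, neg_one_smul] at hij hji
  refine mul_left_cancel₀ (two_ne_zero (α := MvPolynomial σ R)) ?_
  linear_combination hji - hij

theorem card_add_one_smul_eq_X_mul_sum_pderiv [Fintype σ] {c : σ → MvPolynomial σ R}
    (hc : ∀ i, (c i).IsHomogeneous 2) (hrel : ∀ i j, X j * c i = X i * c j) (i : σ) :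
    (Fintype.card σ + 1) • c i = X i * ∑ j, pderiv j (c j) := by
  have hX : ∑ j, pderiv j (X i : MvPolynomial σ R) * c j = c i := by
    rw [Finset.sum_eq_single i (fun j _ hj => by rw [pderiv_X_of_ne hj.symm, zero_mul])
      (by simp), pderiv_X_self, one_mul]
  have euler : ∑ j, X j * pderiv j (c i) = 2 • c i := (hc i).sum_X_mul_pderiv
  calc (Fintype.card σ + 1) • c i
      = ∑ j, pderiv j (X j * c i) - ∑ j, pderiv j (X i) * c j := by
        simp only [pderiv_mul, pderiv_X_self, one_mul, Finset.sum_add_distrib, euler, hX,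
          Finset.sum_const, Finset.card_univ]
        module
    _ = X i * ∑ j, pderiv j (c j) := by
        simp only [hrel i, pderiv_mul, Finset.sum_add_distrib, Finset.mul_sum]
        ring

theorem exists_eq_X_mul_sum_smul_X {k : Type*} [Field k] [CharZero k] [Fintype σ]
    {c : σ → MvPolynomial σ k}
    (hc : ∀ i, (c i).IsHomogeneous 2) (hrel : ∀ i j, X j * c i = X i * c j) :
    ∃ t : σ → k, ∀ i, c i = X i * ∑ j, t j • X j := by
  set L := (Fintype.card σ + 1 : k)⁻¹ • ∑ j, pderiv j (c j)
  have hL : L ∈ Submodule.span k (Set.range X) := by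
    rw [← homogeneousSubmodule_one_eq_span_X]
    exact Submodule.smul_mem _ _ (IsHomogeneous.sum _ _ 1 fun j _ => (hc j).pderiv)
  obtain ⟨t, ht⟩ := Submodule.mem_span_range_iff_exists_fun k |>.mp hL
  refine ⟨t, fun i => ?_⟩
  rw [ht, mul_smul_comm, ← card_add_one_smul_eq_X_mul_sum_pderiv hc hrel i,
    ← Nat.cast_smul_eq_nsmul k, smul_smul, Nat.cast_add_one,
    inv_mul_cancel₀ (Nat.cast_add_one_ne_zero _), one_smul]

end MvPolynomial

/-- If a k-linear map `D` on `k[x_1,…,x_n]` satisfies the graded Leibniz rule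
and sends each variable to a homogeneous polynomial of degree 2, then there is `t : Fin n → k`
with `D (X i) = X i * ∑ j, t j • X j` for all `i`. -/
theorem stmt_0 (k : Type*) [Field k] [CharZero k] (n : ℕ)
    (D : MvPolynomial (Fin n) k →ₗ[k] MvPolynomial (Fin n) k)
    (hLeib : ∀ (d : ℕ) (a b : MvPolynomial (Fin n) k), a.IsHomogeneous d →
      D (a * b) = D a * b + ((-1 : k) ^ d) • (a * D b))
    (hdeg : ∀ i : Fin n, (D (X i)).IsHomogeneous 2) :
    ∃ t : Fin n → k, ∀ i : Fin n, D (X i) = X i * ∑ j : Fin n, t j • X j :=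
  exists_eq_X_mul_sum_smul_X hdeg (IsGradedLeibniz.X_mul_apply_X_comm hLeib)
end

section
/- Let t, t' : Fin n → k and let D, D' : A → A be k-linear maps satisfying the graded Leibniz rule with D(x_i) = x_i * w_t and D'(x_i) = x_i * w_{t'} for all i ∈ Fin n. Then the following are equivalent: (a) there exists a k-algebra automorphism f : A ≃ₐ[k] A such that f(x_i) is homogeneous of degree 1 for every i and f(D a) = D'(f a) for all a ∈ A; (b) there exists an invertible n×n matrix M over k such that t' s = ∑_{j} t j * M j s for every s ∈ Fin n. -/
/-!
A graded derivation of `k[x₁, …, xₙ]` is determined by its values on the variables, and so is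
a map `E` obeying the twisted rule `E (a * b) = E a * φ b + (-1) ^ d • (φ a * E b)`. For a
degree-preserving algebra map `f`, both `f ∘ D` and `D' ∘ f` obey it along `φ = f`, so `f` is a
DG map as soon as `f (D xᵢ) = D' (f xᵢ)` for all `i`. Writing `f xᵢ = ∑ₛ Mᵢₛ xₛ`, this reads
`f xᵢ * f w_t = f xᵢ * w_{t'}`, i.e. `f w_t = w_{t'}`, i.e. `t' = t M`; and `M` is invertible
exactly when `f` is injective on linear forms.
-/

open MvPolynomial Matrix

namespace MvPolynomial

variable {R σ τ : Type*} [CommRing R]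

section LinearForm

variable [Fintype σ]

noncomputable def linearForm (c : σ → R) : MvPolynomial σ R := ∑ j, c j • X j

lemma linearForm_injective : Function.Injective (linearForm : (σ → R) → MvPolynomial σ R) :=
  fun c c' h => _root_.funext (Fintype.linearIndependent_iffₛ.mp (linearIndependent_X σ R) c c' h)

lemma isHomogeneous_linearForm (c : σ → R) : (linearForm c).IsHomogeneous 1 :=
  IsHomogeneous.sum _ _ _ fun j _ => by simpa [smul_eq_C_mul] using isHomogeneous_C_mul_X (c j) j

lemma exists_linearForm_eq {p : MvPolynomial σ R} (hp : p.IsHomogeneous 1) :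
    ∃ c, linearForm c = p := by
  rw [← mem_homogeneousSubmodule, homogeneousSubmodule_one_eq_span_X] at hp
  exact Submodule.mem_span_range_iff_exists_fun R |>.mp hp

lemma map_linearForm {N : Type*} [AddCommMonoid N] [Module R N]
    (f : MvPolynomial σ R →ₗ[R] N) (c : σ → R) :
    f (linearForm c) = ∑ j, c j • f (X j) := by
  simp [linearForm, map_sum, map_smul]

lemma map_linearForm_eq_mul (D : MvPolynomial σ R →ₗ[R] MvPolynomial σ R) {w : MvPolynomial σ R}
    (hD : ∀ i, D (X i) = X i * w) (c : σ → R) : D (linearForm c) = linearForm c * w := by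
  simp [linearForm, hD, Finset.sum_mul]

lemma linearForm_vecMul (c : σ → R) (M : Matrix σ σ R) :
    linearForm (c ᵥ* M) = ∑ i, c i • linearForm (M i) := by
  simp only [linearForm, vecMul, dotProduct, Finset.sum_smul, Finset.smul_sum, smul_smul]
  exact Finset.sum_comm

noncomputable def linearSubst (M : Matrix σ σ R) : MvPolynomial σ R →ₐ[R] MvPolynomial σ R :=
  aeval fun i => linearForm (M i)

lemma linearSubst_X (M : Matrix σ σ R) (i : σ) : linearSubst M (X i) = linearForm (M i) :=
  aeval_X _ i

lemma linearSubst_linearForm (M : Matrix σ σ R) (c : σ → R) :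
    linearSubst M (linearForm c) = linearForm (c ᵥ* M) := by
  rw [linearForm_vecMul, ← AlgHom.coe_toLinearMap, map_linearForm]
  simp [linearSubst_X]

lemma linearSubst_mul (M N : Matrix σ σ R) :
    linearSubst (M * N) = (linearSubst N).comp (linearSubst M) := by
  refine algHom_ext fun i => ?_
  rw [AlgHom.comp_apply, linearSubst_X, linearSubst_X, linearSubst_linearForm]
  rfl

lemma linearSubst_one [DecidableEq σ] : linearSubst (1 : Matrix σ σ R) = AlgHom.id R _ := by
  refine algHom_ext fun i => ?_
  simp [linearSubst_X, linearForm, one_apply]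

noncomputable def linearSubstEquiv [DecidableEq σ] (M : (Matrix σ σ R)ˣ) :
    MvPolynomial σ R ≃ₐ[R] MvPolynomial σ R :=
  AlgEquiv.ofAlgHom (linearSubst M) (linearSubst ↑M⁻¹)
    (by rw [← linearSubst_mul, M.inv_mul, linearSubst_one])
    (by rw [← linearSubst_mul, M.mul_inv, linearSubst_one])

end LinearForm

lemma IsHomogeneous.algHom {B : Type*} [CommRing B] [Algebra R B]
    {p : MvPolynomial τ R} {d : ℕ} (hp : p.IsHomogeneous d)
    (g : MvPolynomial τ R →ₐ[R] MvPolynomial σ B)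
    (hg : ∀ i, (g (X i)).IsHomogeneous 1) : (g p).IsHomogeneous d := by
  simpa [← aeval_unique] using hp.aeval (g ∘ X) hg

section GradedDerivation

variable {B C : Type*} [Ring B] [Algebra R B] [Ring C] [Algebra R C]

def IsGradedDerivation (φ : MvPolynomial σ R →ₐ[R] B) (E : MvPolynomial σ R →ₗ[R] B) : Prop :=
  ∀ (d : ℕ) (a b : MvPolynomial σ R), a.IsHomogeneous d →
    E (a * b) = E a * φ b + ((-1 : R) ^ d) • (φ a * E b)

namespace IsGradedDerivation

variable {φ : MvPolynomial σ R →ₐ[R] B} {E E' : MvPolynomial σ R →ₗ[R] B}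

lemma map_one (hE : IsGradedDerivation φ E) : E 1 = 0 := by
  simpa using hE 0 1 1 (isHomogeneous_one σ R)

lemma ext (hE : IsGradedDerivation φ E) (hE' : IsGradedDerivation φ E')
    (h : ∀ i, E (X i) = E' (X i)) : E = E' := by
  refine LinearMap.ext fun p => ?_
  induction p using MvPolynomial.induction_on with
  | C a => rw [← mul_one (C a), ← smul_eq_C_mul, map_smul, map_smul, hE.map_one, hE'.map_one]
  | add p q hp hq => rw [map_add, map_add, hp, hq]
  | mul_X p i hp =>
    rw [mul_comm, hE 1 _ _ (isHomogeneous_X R i), hE' 1 _ _ (isHomogeneous_X R i), h, hp]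

lemma algHom_comp (hE : IsGradedDerivation φ E) (ψ : B →ₐ[R] C) :
    IsGradedDerivation (ψ.comp φ) (ψ.toLinearMap ∘ₗ E) := by
  intro d a b ha
  simp [hE d a b ha]

lemma comp_algHom (hE : IsGradedDerivation φ E) (g : MvPolynomial τ R →ₐ[R] MvPolynomial σ R)
    (hg : ∀ i, (g (X i)).IsHomogeneous 1) :
    IsGradedDerivation (φ.comp g) (E ∘ₗ g.toLinearMap) := by
  intro d a b ha
  simp [hE d _ _ (ha.algHom g hg)]

lemma algHom_comp_eq_comp_algHom {D : MvPolynomial σ R →ₗ[R] MvPolynomial σ R}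
    {D' : MvPolynomial τ R →ₗ[R] MvPolynomial τ R} (hD : IsGradedDerivation (AlgHom.id R _) D)
    (hD' : IsGradedDerivation (AlgHom.id R _) D') (f : MvPolynomial σ R →ₐ[R] MvPolynomial τ R)
    (hf : ∀ i, (f (X i)).IsHomogeneous 1) (h : ∀ i, f (D (X i)) = D' (f (X i))) :
    f.toLinearMap ∘ₗ D = D' ∘ₗ f.toLinearMap := by
  have hfD := hD.algHom_comp f
  have hD'f := hD'.comp_algHom f hf
  rw [AlgHom.comp_id] at hfD
  rw [AlgHom.id_comp] at hD'f
  exact hfD.ext hD'f h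

end IsGradedDerivation

end GradedDerivation

end MvPolynomial

theorem stmt_2_general (k : Type*) [Field k] (n : ℕ) (t t' : Fin n → k)
    (D D' : MvPolynomial (Fin n) k →ₗ[k] MvPolynomial (Fin n) k)
    (hLeib : ∀ (d : ℕ) (a b : MvPolynomial (Fin n) k), a.IsHomogeneous d →
      D (a * b) = D a * b + ((-1 : k) ^ d) • (a * D b))
    (hLeib' : ∀ (d : ℕ) (a b : MvPolynomial (Fin n) k), a.IsHomogeneous d →
      D' (a * b) = D' a * b + ((-1 : k) ^ d) • (a * D' b))
    (hD : ∀ i : Fin n, D (X i) = X i * ∑ j : Fin n, t j • X j)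
    (hD' : ∀ i : Fin n, D' (X i) = X i * ∑ j : Fin n, t' j • X j) :
    (∃ f : MvPolynomial (Fin n) k ≃ₐ[k] MvPolynomial (Fin n) k,
        (∀ i : Fin n, (f (X i)).IsHomogeneous 1) ∧
        (∀ a : MvPolynomial (Fin n) k, f (D a) = D' (f a))) ↔
    (∃ M : Matrix (Fin n) (Fin n) k, IsUnit M ∧
        ∀ s : Fin n, t' s = ∑ j : Fin n, t j * M j s) := by
  change ∀ i, D (X i) = X i * linearForm t at hD
  change ∀ i, D' (X i) = X i * linearForm t' at hD'
  change _ ↔ ∃ M, IsUnit M ∧ ∀ s, t' s = (t ᵥ* M) s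
  constructor
  · rintro ⟨f, hf, hfD⟩
    obtain ⟨M, hM⟩ : ∃ M : Matrix (Fin n) (Fin n) k, ∀ i, linearForm (M i) = f (X i) :=
      Classical.skolem.mp fun i => exists_linearForm_eq (hf i)
    have hf_linearForm (c : Fin n → k) : f (linearForm c) = linearForm (c ᵥ* M) := by
      rw [linearForm_vecMul, ← AlgEquiv.toLinearMap_apply, map_linearForm]
      simp [hM]
    refine ⟨M, vecMul_injective_iff_isUnit.mp fun c c' h => ?_, fun s => ?_⟩
    · refine linearForm_injective (f.injective ?_)
      rw [hf_linearForm, hf_linearForm]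
      exact congrArg linearForm h
    · have hXs : f (X s) ≠ 0 := (map_ne_zero_iff f f.injective).mpr (X_ne_zero s)
      have hw : f (X s) * linearForm (t ᵥ* M) = f (X s) * linearForm t' := by
        rw [← hf_linearForm, ← map_mul, ← hD, hfD, ← hM, map_linearForm_eq_mul D' hD']
      exact congrFun (linearForm_injective (mul_left_cancel₀ hXs hw)).symm s
  · rintro ⟨_, ⟨M, rfl⟩, ht⟩
    obtain rfl : t' = t ᵥ* M := _root_.funext ht
    have hM (i : Fin n) : (linearSubst (M : Matrix (Fin n) (Fin n) k) (X i)).IsHomogeneous 1 := by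
      rw [linearSubst_X]
      exact isHomogeneous_linearForm _
    have hMD : (linearSubst ↑M).toLinearMap ∘ₗ D = D' ∘ₗ (linearSubst ↑M).toLinearMap :=
      IsGradedDerivation.algHom_comp_eq_comp_algHom hLeib hLeib' _ hM fun i => by
        rw [hD, map_mul, linearSubst_X, linearSubst_linearForm, map_linearForm_eq_mul D' hD']
    exact ⟨linearSubstEquiv M, hM, LinearMap.congr_fun hMD⟩

/-- Two DG polynomial algebras `(A, D)` (with parameters `t`) and `(A, D')`
(with parameters `t'`) are DG-isomorphic if and only if `t' = t · M` for some invertible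
matrix `M`. -/
theorem stmt_2 (k : Type*) [Field k] [CharZero k] (n : ℕ) (t t' : Fin n → k)
    (D D' : MvPolynomial (Fin n) k →ₗ[k] MvPolynomial (Fin n) k)
    (hLeib : ∀ (d : ℕ) (a b : MvPolynomial (Fin n) k), a.IsHomogeneous d →
      D (a * b) = D a * b + ((-1 : k) ^ d) • (a * D b))
    (hLeib' : ∀ (d : ℕ) (a b : MvPolynomial (Fin n) k), a.IsHomogeneous d →
      D' (a * b) = D' a * b + ((-1 : k) ^ d) • (a * D' b))
    (hD : ∀ i : Fin n, D (X i) = X i * ∑ j : Fin n, t j • X j)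
    (hD' : ∀ i : Fin n, D' (X i) = X i * ∑ j : Fin n, t' j • X j) :
    (∃ f : MvPolynomial (Fin n) k ≃ₐ[k] MvPolynomial (Fin n) k,
        (∀ i : Fin n, (f (X i)).IsHomogeneous 1) ∧
        (∀ a : MvPolynomial (Fin n) k, f (D a) = D' (f a))) ↔
    (∃ M : Matrix (Fin n) (Fin n) k, IsUnit M ∧
        ∀ s : Fin n, t' s = ∑ j : Fin n, t j * M j s) :=
  stmt_2_general k n t t' D D' hLeib hLeib' hD hD'
end

section
/- Assume n ≥ 1 and let D : A → A be a k-linear map satisfying the graded Leibniz rule with D(x_i) = x_1 * x_i for all i ∈ Fin n. Then for every m ≥ 1 and every f ∈ A homogeneous of degree 2m, there exist g ∈ A homogeneous of degree 2m−1 and an element h of the k-subalgebra of A generated by the set of quadratic products { x_i * x_j | i ≠ 0 and j ≠ 0 } such that f = D g + h. That is, the cohomology of A(1,0,…,0) is generated as a k-algebra by the classes of the products x_i x_j with 2 ≤ i ≤ j ≤ n. -/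
open MvPolynomial

namespace Stmt10Aux

variable {k : Type*} [Field k] [CharZero k] {n : ℕ}

lemma deg_add (a b : Fin n →₀ ℕ) :
    Finsupp.degree (a + b) = Finsupp.degree a + Finsupp.degree b := by
  simp [Finsupp.degree_eq_weight_one, map_add]

lemma deg_single (i : Fin n) : Finsupp.degree (Finsupp.single i 1) = 1 := by
  simp [Finsupp.degree_eq_weight_one, Finsupp.weight_apply, Finsupp.sum_single_index]

lemma key_split (s : Fin n →₀ ℕ) (i : Fin n) (h : s i ≠ 0) :
    Finsupp.single i 1 + (s - Finsupp.single i 1) = s := by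
  ext j
  rw [Finsupp.add_apply, Finsupp.tsub_apply, Finsupp.single_apply]
  split_ifs with hj
  · subst hj; omega
  · omega

lemma X_mul_monomial (i : Fin n) (t : Fin n →₀ ℕ) (c : k) :
    X i * monomial t c = monomial (Finsupp.single i 1 + t) c := by
  rw [X, monomial_mul, one_mul]

lemma D_one (D : MvPolynomial (Fin n) k →ₗ[k] MvPolynomial (Fin n) k)
    (hLeib : ∀ (d : ℕ) (a b : MvPolynomial (Fin n) k), a.IsHomogeneous d →
      D (a * b) = D a * b + ((-1 : k) ^ d) • (a * D b)) : D 1 = 0 := by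
  have h := hLeib 0 1 1 (isHomogeneous_one _ _)
  simp only [one_mul, mul_one, pow_zero, one_smul] at h
  nth_rewrite 1 [← add_zero (D 1)] at h
  exact (add_left_cancel h).symm

lemma D_monomial (hn : 1 ≤ n)
    (D : MvPolynomial (Fin n) k →ₗ[k] MvPolynomial (Fin n) k)
    (hLeib : ∀ (d : ℕ) (a b : MvPolynomial (Fin n) k), a.IsHomogeneous d →
      D (a * b) = D a * b + ((-1 : k) ^ d) • (a * D b))
    (hD : ∀ i : Fin n, D (X i) = X ⟨0, hn⟩ * X i) :
    ∀ (d : ℕ) (s : Fin n →₀ ℕ) (c : k), Finsupp.degree s = d →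
      D (monomial s c) = if Odd d then X ⟨0, hn⟩ * monomial s c else 0 := by
  intro d
  induction d with
  | zero =>
    intro s c hs
    rw [Finsupp.degree_eq_zero_iff] at hs
    subst hs
    have : (monomial (0 : Fin n →₀ ℕ) c : MvPolynomial (Fin n) k) = c • 1 := by
      simp [monomial_zero', C_eq_smul_one]
    rw [this, map_smul, D_one D hLeib, smul_zero]
    simp [Nat.odd_iff]
  | succ d ih =>
    intro s c hs
    have hs0 : s ≠ 0 := by
      intro h; rw [h] at hs; simp at hs
    obtain ⟨i, hi⟩ : ∃ i, s i ≠ 0 := by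
      by_contra hc
      push_neg at hc
      exact hs0 (Finsupp.ext fun j => hc j)
    set t := s - Finsupp.single i 1 with ht
    have hsplit : Finsupp.single i 1 + t = s := by rw [ht]; exact key_split s i hi
    have hdt : Finsupp.degree t = d := by
      have := deg_add (Finsupp.single i 1) t
      rw [hsplit, hs, deg_single] at this
      omega
    have hmon : monomial s c = X i * monomial t c := by
      rw [X_mul_monomial, hsplit]
    have hq := ih t c hdt
    rw [hmon, hLeib 1 (X i) (monomial t c) (isHomogeneous_X _ _), hD i, hq]
    rcases Nat.even_or_odd d with hd | hd
    · have h1 : ¬ Odd d := by simp [Nat.not_odd_iff_even, hd]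
      have h2 : Odd (d + 1) := Even.add_one hd
      simp only [if_neg h1, if_pos h2, mul_zero, smul_zero, add_zero]
      ring
    · have h1 : ¬ Odd (d + 1) := by simp [Nat.not_odd_iff_even, Odd.add_one hd]
      simp only [if_pos hd, if_neg h1, pow_one]
      rw [neg_smul, one_smul]
      ring

lemma D_homog (hn : 1 ≤ n)
    (D : MvPolynomial (Fin n) k →ₗ[k] MvPolynomial (Fin n) k)
    (hLeib : ∀ (d : ℕ) (a b : MvPolynomial (Fin n) k), a.IsHomogeneous d →
      D (a * b) = D a * b + ((-1 : k) ^ d) • (a * D b))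
    (hD : ∀ i : Fin n, D (X i) = X ⟨0, hn⟩ * X i)
    (d : ℕ) (p : MvPolynomial (Fin n) k) (hp : p.IsHomogeneous d) :
    D p = if Odd d then X ⟨0, hn⟩ * p else 0 := by
  conv_lhs => rw [p.as_sum]
  rw [map_sum]
  have : ∀ v ∈ p.support, D (monomial v (coeff v p))
      = if Odd d then X ⟨0, hn⟩ * monomial v (coeff v p) else 0 := by
    intro v hv
    apply D_monomial hn D hLeib hD
    rw [Finsupp.degree_eq_weight_one]
    exact hp (mem_support_iff.mp hv)
  rw [Finset.sum_congr rfl this]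
  split_ifs with h
  · rw [← Finset.mul_sum, ← p.as_sum]
  · simp

lemma mem_adjoin (hn : 1 ≤ n) :
    ∀ (e : ℕ) (s : Fin n →₀ ℕ) (c : k), Finsupp.degree s = 2 * e → s ⟨0, hn⟩ = 0 →
      (monomial s c : MvPolynomial (Fin n) k) ∈ Algebra.adjoin k
        {p : MvPolynomial (Fin n) k |
          ∃ i j : Fin n, i ≠ ⟨0, hn⟩ ∧ j ≠ ⟨0, hn⟩ ∧ p = X i * X j} := by
  intro e
  induction e with
  | zero =>
    intro s c hs _
    rw [Nat.mul_zero, Finsupp.degree_eq_zero_iff] at hs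
    subst hs
    rw [monomial_zero']
    exact Subalgebra.algebraMap_mem _ c
  | succ e ih =>
    intro s c hs hs0
    obtain ⟨i, hi⟩ : ∃ i, s i ≠ 0 := by
      by_contra hc
      push_neg at hc
      have : s = 0 := Finsupp.ext fun j => hc j
      rw [this, map_zero] at hs; omega
    set t := s - Finsupp.single i 1 with ht
    have hsplit : Finsupp.single i 1 + t = s := by rw [ht]; exact key_split s i hi
    have hdt : Finsupp.degree t = 2 * e + 1 := by
      have := deg_add (Finsupp.single i 1) t
      rw [hsplit, hs, deg_single] at this
      omega
    obtain ⟨j, hj⟩ : ∃ j, t j ≠ 0 := by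
      by_contra hc
      push_neg at hc
      have : t = 0 := Finsupp.ext fun j => hc j
      rw [this] at hdt; simp at hdt
    set u := t - Finsupp.single j 1 with hu
    have hsplit2 : Finsupp.single j 1 + u = t := by rw [hu]; exact key_split t j hj
    have hdu : Finsupp.degree u = 2 * e := by
      have := deg_add (Finsupp.single j 1) u
      rw [hsplit2, hdt, deg_single] at this
      omega
    have hti0 : t ⟨0, hn⟩ = 0 := by
      have : t ⟨0, hn⟩ ≤ s ⟨0, hn⟩ := by
        rw [ht, Finsupp.tsub_apply]; omega
      omega
    have hui0 : u ⟨0, hn⟩ = 0 := by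
      have : u ⟨0, hn⟩ ≤ t ⟨0, hn⟩ := by
        rw [hu, Finsupp.tsub_apply]; omega
      omega
    have hine : i ≠ ⟨0, hn⟩ := by intro h; rw [h] at hi; exact hi hs0
    have hjne : j ≠ ⟨0, hn⟩ := by intro h; rw [h] at hj; exact hj hti0
    have hmon : (monomial s c : MvPolynomial (Fin n) k) = (X i * X j) * monomial u c := by
      rw [mul_assoc, X_mul_monomial j u c, hsplit2, X_mul_monomial i t c, hsplit]
    rw [hmon]
    exact mul_mem (Algebra.subset_adjoin ⟨i, j, hine, hjne, rfl⟩) (ih u c hdu hui0)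

end Stmt10Aux

open Stmt10Aux in
/-- For the DG polynomial algebra `A(1,0,…,0)`, `m ≥ 1` and `f` homogeneous
of degree `2m`, one can write `f = D g + h` with `g` homogeneous of degree `2m - 1` and `h`
in the k-subalgebra generated by the quadratic products `X i * X j` with `i ≠ 0 ≠ j`. -/
theorem stmt_10 (k : Type*) [Field k] [CharZero k] (n : ℕ) (hn : 1 ≤ n)
    (D : MvPolynomial (Fin n) k →ₗ[k] MvPolynomial (Fin n) k)
    (hLeib : ∀ (d : ℕ) (a b : MvPolynomial (Fin n) k), a.IsHomogeneous d →
      D (a * b) = D a * b + ((-1 : k) ^ d) • (a * D b))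
    (hD : ∀ i : Fin n, D (X i) = X ⟨0, hn⟩ * X i) :
    ∀ m : ℕ, 1 ≤ m → ∀ f : MvPolynomial (Fin n) k, f.IsHomogeneous (2 * m) →
      ∃ (g h : MvPolynomial (Fin n) k),
        g.IsHomogeneous (2 * m - 1) ∧
        h ∈ Algebra.adjoin k {p : MvPolynomial (Fin n) k |
          ∃ i j : Fin n, i ≠ ⟨0, hn⟩ ∧ j ≠ ⟨0, hn⟩ ∧ p = X i * X j} ∧
        f = D g + h := by
  intro m hm f hf
  classical
  set i0 : Fin n := ⟨0, hn⟩ with hi0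
  have hdeg : ∀ v ∈ f.support, Finsupp.degree v = 2 * m := by
    intro v hv
    rw [Finsupp.degree_eq_weight_one]
    exact hf (mem_support_iff.mp hv)
  set g : MvPolynomial (Fin n) k :=
    ∑ v ∈ f.support.filter (fun v => v i0 ≠ 0),
      monomial (v - Finsupp.single i0 1) (coeff v f) with hg
  set h : MvPolynomial (Fin n) k :=
    ∑ v ∈ f.support.filter (fun v => v i0 = 0), monomial v (coeff v f) with hh
  have hghom : g.IsHomogeneous (2 * m - 1) := by
    apply IsHomogeneous.sum
    intro v hv
    rw [Finset.mem_filter] at hv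
    apply isHomogeneous_monomial
    have h1 := deg_add (Finsupp.single i0 1) (v - Finsupp.single i0 1)
    rw [key_split v i0 hv.2, hdeg v hv.1, deg_single] at h1
    omega
  refine ⟨g, h, hghom, ?_, ?_⟩
  · apply Subalgebra.sum_mem
    intro v hv
    rw [Finset.mem_filter] at hv
    exact mem_adjoin hn m v (coeff v f) (hdeg v hv.1) hv.2
  · have hodd : Odd (2 * m - 1) := ⟨m - 1, by omega⟩
    rw [D_homog hn D hLeib hD _ g hghom, if_pos hodd]
    have hXg : X i0 * g =
        ∑ v ∈ f.support.filter (fun v => v i0 ≠ 0), monomial v (coeff v f) := by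
      rw [hg, Finset.mul_sum]
      apply Finset.sum_congr rfl
      intro v hv
      rw [Finset.mem_filter] at hv
      rw [X_mul_monomial, key_split v i0 hv.2]
    rw [hXg, hh]
    have hsum := Finset.sum_filter_add_sum_filter_not f.support (fun v => v i0 ≠ 0)
      (fun v => monomial v (coeff v f))
    have hfilters : f.support.filter (fun v => ¬ v i0 ≠ 0)
        = f.support.filter (fun v => v i0 = 0) := by
      apply Finset.filter_congr
      intro v _
      simp
    rw [hfilters] at hsum
    rw [hsum]
    exact f.as_sum
end

section
/- Let t : Fin n → k and let D : A → A be a k-linear map satisfying the graded Leibniz rule with D(x_i) = x_i * w_t for all i ∈ Fin n. Then for every d : ℕ and every f ∈ A homogeneous of degree d: if d is odd then D f = f * w_t, and if d is even then D f = 0. -/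
/-!
Since `x_i` has odd degree, the graded Leibniz rule gives `D (x_i * b) = x_i * w * b - x_i * D b`.
Building a monomial one variable at a time, `D` therefore alternates between multiplication by `w`
(odd degree) and `0` (even degree, starting from `D 1 = 0`); linearity extends this from
monomials to homogeneous polynomials.
-/

open MvPolynomial

def IsGradedDerivation {σ R : Type*} [CommRing R]
    (D : MvPolynomial σ R →ₗ[R] MvPolynomial σ R) : Prop :=
  ∀ (d : ℕ) (a b : MvPolynomial σ R), a.IsHomogeneous d →
    D (a * b) = D a * b + ((-1 : R) ^ d) • (a * D b)

namespace IsGradedDerivation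

variable {σ R : Type*} [CommRing R] {D : MvPolynomial σ R →ₗ[R] MvPolynomial σ R}

theorem map_one (hD : IsGradedDerivation D) : D 1 = 0 := by
  simpa using hD 0 1 1 (isHomogeneous_one σ R)

theorem map_C (hD : IsGradedDerivation D) (a : R) : D (C a) = 0 := by
  rw [C_eq_smul_one, map_smul, hD.map_one, smul_zero]

theorem map_X_mul (hD : IsGradedDerivation D) (i : σ) (b : MvPolynomial σ R) :
    D (X i * b) = D (X i) * b - X i * D b := by
  rw [hD 1 (X i) b (isHomogeneous_X R i), pow_one, neg_one_smul, sub_eq_add_neg]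

variable {w : MvPolynomial σ R}

theorem map_monomial (hD : IsGradedDerivation D) (hX : ∀ i, D (X i) = X i * w)
    (s : σ →₀ ℕ) (c : R) :
    D (monomial s c) = if Even s.degree then 0 else monomial s c * w := by
  classical
  obtain ⟨m, rfl⟩ := Multiset.toFinsupp.surjective s
  induction m using Multiset.induction_on with
  | empty => simp [← C_apply, hD.map_C]
  | cons i m ih =>
    rw [← Multiset.singleton_add, map_add, Multiset.toFinsupp_singleton, monomial_single_add,
      pow_one, hD.map_X_mul, hX, ih, map_add, Finsupp.degree_single, add_comm 1]
    simp only [Nat.even_add_one]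
    split_ifs <;> ring

theorem map_of_isHomogeneous (hD : IsGradedDerivation D) (hX : ∀ i, D (X i) = X i * w)
    {d : ℕ} {f : MvPolynomial σ R} (hf : f.IsHomogeneous d) :
    D f = if Even d then 0 else f * w := by
  have hdeg : ∀ s ∈ f.support, s.degree = d := fun s hs ↦ by
    rw [Finsupp.degree_eq_weight_one]
    exact hf (mem_support_iff.mp hs)
  conv_lhs => rw [f.as_sum, map_sum]
  rw [Finset.sum_congr rfl fun s hs ↦ by rw [hD.map_monomial hX, hdeg s hs]]
  split_ifs
  · exact Finset.sum_const_zero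
  · rw [← Finset.sum_mul, ← f.as_sum]

end IsGradedDerivation

theorem stmt_11_general (k : Type*) [Field k] (n : ℕ) (t : Fin n → k)
    (D : MvPolynomial (Fin n) k →ₗ[k] MvPolynomial (Fin n) k)
    (hLeib : ∀ (d : ℕ) (a b : MvPolynomial (Fin n) k), a.IsHomogeneous d →
      D (a * b) = D a * b + ((-1 : k) ^ d) • (a * D b))
    (hD : ∀ i : Fin n, D (X i) = X i * ∑ j : Fin n, t j • X j) :
    ∀ (d : ℕ) (f : MvPolynomial (Fin n) k), f.IsHomogeneous d →
      (Odd d → D f = f * ∑ j : Fin n, t j • X j) ∧ (Even d → D f = 0) := by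
  intro d f hf
  rw [IsGradedDerivation.map_of_isHomogeneous hLeib hD hf]
  exact ⟨fun hodd ↦ if_neg (Nat.not_even_iff_odd.mpr hodd), fun heven ↦ if_pos heven⟩

/-- For the DG polynomial algebra `A(t)` (so `D (X i) = X i * w_t` with
`w_t = ∑ j, t j • X j`), every homogeneous `f` of odd degree satisfies `D f = f * w_t`, and
every homogeneous `f` of even degree satisfies `D f = 0`. -/
theorem stmt_11 (k : Type*) [Field k] [CharZero k] (n : ℕ) (t : Fin n → k)
    (D : MvPolynomial (Fin n) k →ₗ[k] MvPolynomial (Fin n) k)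
    (hLeib : ∀ (d : ℕ) (a b : MvPolynomial (Fin n) k), a.IsHomogeneous d →
      D (a * b) = D a * b + ((-1 : k) ^ d) • (a * D b))
    (hD : ∀ i : Fin n, D (X i) = X i * ∑ j : Fin n, t j • X j) :
    ∀ (d : ℕ) (f : MvPolynomial (Fin n) k), f.IsHomogeneous d →
      (Odd d → D f = f * ∑ j : Fin n, t j • X j) ∧ (Even d → D f = 0) :=
  stmt_11_general k n t D hLeib hD
end

section
/- Let t : Fin n → k and let D : A → A be a k-linear map satisfying the graded Leibniz rule with D(x_i) = x_i * w_t for all i ∈ Fin n. Then D ∘ D = 0. -/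
open MvPolynomial

/-- The differential of the DG polynomial algebra `A(t)` squares to zero. -/
theorem stmt_12 (k : Type*) [Field k] [CharZero k] (n : ℕ) (t : Fin n → k)
    (D : MvPolynomial (Fin n) k →ₗ[k] MvPolynomial (Fin n) k)
    (hLeib : ∀ (d : ℕ) (a b : MvPolynomial (Fin n) k), a.IsHomogeneous d →
      D (a * b) = D a * b + ((-1 : k) ^ d) • (a * D b))
    (hD : ∀ i : Fin n, D (X i) = X i * ∑ j : Fin n, t j • X j) :
    ∀ a : MvPolynomial (Fin n) k, D (D a) = 0 := by
  set w : MvPolynomial (Fin n) k := ∑ j : Fin n, t j • X j with hwdef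
  have hX : ∀ i : Fin n, (X i : MvPolynomial (Fin n) k).IsHomogeneous 1 :=
    fun i => isHomogeneous_X k i
  have hw : w.IsHomogeneous 1 := by
    apply IsHomogeneous.sum
    intro j _
    rw [smul_eq_C_mul]; exact (hX j).C_mul (t j)
  have hD1 : D 1 = 0 := by
    have := hLeib 0 1 1 (isHomogeneous_one _ _)
    simpa using this
  have hDw : D w = w * w := by
    rw [hwdef, map_sum]
    rw [Finset.sum_mul]
    congr 1
    ext j
    rw [map_smul, hD j, smul_mul_assoc]
  have hDDX : ∀ i : Fin n, D (D (X i)) = 0 := by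
    intro i
    rw [hD i, hLeib 1 (X i) w (hX i), hD i, hDw]
    simp [smul_smul]
    ring
  intro a
  induction a using MvPolynomial.induction_on with
  | C a =>
      have : (C a : MvPolynomial (Fin n) k) = a • 1 := by
        rw [smul_eq_C_mul, mul_one]
      rw [this, map_smul, hD1]
      simp
  | add p q hp hq =>
      rw [map_add, map_add, hp, hq, add_zero]
  | mul_X p i hp =>
      rw [mul_comm, hLeib 1 (X i) p (hX i), hD i, map_add]
      rw [hLeib 2 (X i * w) p ((hX i).mul hw)]
      have hDXw : D (X i * w) = 0 := by
        have := hDDX i; rwa [hD i] at this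
      rw [hDXw]
      rw [map_smul, hLeib 1 (X i) (D p) (hX i), hD i, hp]
      simp [smul_smul]
end

section
/- Let q : Fin n → A be a family of polynomials such that each q i is homogeneous of degree 2 and q j * x_k = x_j * q k for all j, k ∈ Fin n. Then there exists t : Fin n → k such that q i = x_i * (∑_{j} t j • x_j) for all i ∈ Fin n. -/
/-!
Comparing the coefficients of `q j * x l = x j * q l` shows that every monomial of `q j`
contains `x j` (a degree-two monomial without `x j` contains some other `x l`), so
`q j = x j * p j`. The relation then reads `x j * x l * p j = x j * x l * p l`, so all `p j`
equal one polynomial `p`, which is homogeneous of degree one and hence a linear form.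
-/

namespace MvPolynomial

variable {σ R : Type*} [CommSemiring R]

theorem X_dvd_iff_forall_mem_support {i : σ} {p : MvPolynomial σ R} :
    X i ∣ p ↔ ∀ d ∈ p.support, d i ≠ 0 := by
  classical
  constructor
  · rintro ⟨r, rfl⟩ d hd
    rw [mem_support_iff, coeff_X_mul'] at hd
    exact Finsupp.mem_support_iff.mp (of_not_not fun h => hd (if_neg h))
  · intro h
    rw [p.as_sum]
    exact Finset.dvd_sum fun d hd => X_dvd_monomial.mpr (Or.inr (h d hd))

theorem IsHomogeneous.X_dvd_of_forall_X_dvd_mul_X {p : MvPolynomial σ R} {m : ℕ}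
    (hp : p.IsHomogeneous m) (hm : m ≠ 0) {j : σ} (h : ∀ l, l ≠ j → X j ∣ p * X l) :
    X j ∣ p := by
  classical
  refine X_dvd_iff_forall_mem_support.mpr fun d hd hdj => ?_
  obtain ⟨l, hl⟩ : ∃ l, d l ≠ 0 := by
    by_contra! h0
    have : d = 0 := Finsupp.ext h0
    exact hm (by simpa [this] using (hp (mem_support_iff.mp hd)).symm)
  have hlj : l ≠ j := by rintro rfl; exact hl hdj
  have hmem : d + Finsupp.single l 1 ∈ (p * X l).support := by
    rwa [mem_support_iff, coeff_mul_X, ← mem_support_iff]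
  apply X_dvd_iff_forall_mem_support.mp (h l hlj) _ hmem
  simp [hdj, hlj]

theorem IsHomogeneous.of_X_mul {i : σ} {p : MvPolynomial σ R} {m : ℕ}
    (h : (X i * p).IsHomogeneous (m + 1)) : p.IsHomogeneous m := by
  intro d hd
  have := h (by rwa [coeff_X_mul] : coeff (Finsupp.single i 1 + d) (X i * p) ≠ 0)
  rw [map_add, Finsupp.weight_single, Pi.one_apply, smul_eq_mul, mul_one] at this
  omega

theorem IsHomogeneous.exists_eq_sum_smul_X [Fintype σ] {p : MvPolynomial σ R}
    (hp : p.IsHomogeneous 1) : ∃ t : σ → R, p = ∑ j, t j • X j := by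
  have : p ∈ Submodule.span R (Set.range X) := by
    rw [← homogeneousSubmodule_one_eq_span_X]
    exact hp
  obtain ⟨t, ht⟩ := (Submodule.mem_span_range_iff_exists_fun R).mp this
  exact ⟨t, ht.symm⟩

theorem exists_eq_X_mul_sum_smul_X_of_mul_X_eq_X_mul [Fintype σ] (q : σ → MvPolynomial σ R)
    (hq : ∀ i, (q i).IsHomogeneous 2) (hcomm : ∀ j l, q j * X l = X j * q l) :
    ∃ t : σ → R, ∀ i, q i = X i * ∑ j, t j • X j := by
  rcases isEmpty_or_nonempty σ with hσ | ⟨⟨i₀⟩⟩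
  · exact ⟨0, isEmptyElim⟩
  choose p hp using fun j =>
    (hq j).X_dvd_of_forall_X_dvd_mul_X two_ne_zero fun l _ => ⟨q l, hcomm j l⟩
  have hp_eq : ∀ j, p j = p i₀ := fun j => by
    have := hcomm j i₀
    rwa [hp j, hp i₀, mul_right_comm, mul_assoc, X_mul_cancel_left_iff, X_mul_cancel_left_iff]
      at this
  have hp₀ : (X i₀ * p i₀).IsHomogeneous (1 + 1) := hp i₀ ▸ hq i₀
  obtain ⟨t, ht⟩ := hp₀.of_X_mul.exists_eq_sum_smul_X
  exact ⟨t, fun i => by rw [hp i, hp_eq i, ht]⟩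

end MvPolynomial

open MvPolynomial

theorem stmt_13_general (k : Type*) [Field k] (n : ℕ)
    (q : Fin n → MvPolynomial (Fin n) k)
    (hq : ∀ i : Fin n, (q i).IsHomogeneous 2)
    (hcomm : ∀ j l : Fin n, q j * X l = X j * q l) :
    ∃ t : Fin n → k, ∀ i : Fin n, q i = X i * ∑ j : Fin n, t j • X j :=
  exists_eq_X_mul_sum_smul_X_of_mul_X_eq_X_mul q hq hcomm

/-- If `q : Fin n → k[x_1,…,x_n]` is a family of homogeneous polynomials of
degree 2 with `q j * X l = X j * q l` for all `j, l`, then there is `t : Fin n → k` with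
`q i = X i * ∑ j, t j • X j` for all `i`. -/
theorem stmt_13 (k : Type*) [Field k] [CharZero k] (n : ℕ)
    (q : Fin n → MvPolynomial (Fin n) k)
    (hq : ∀ i : Fin n, (q i).IsHomogeneous 2)
    (hcomm : ∀ j l : Fin n, q j * X l = X j * q l) :
    ∃ t : Fin n → k, ∀ i : Fin n, q i = X i * ∑ j : Fin n, t j • X j :=
  stmt_13_general k n q hq hcomm
end
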